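/- arXiv:1708.03730 — 2 statements merged into one kernel-verified Lean document; each statement's English description precedes it below -/
import Mathlib

section
/- Let μ and ν be probability measures on D, let u : D → ℝ be bounded with u > 0, (u,μ) > 0 and (u,ν) > 0. Then for any bounded measurable h: |(h, u·μ) - (h, u·ν)| ≤ (2 ‖u‖∞ ‖h‖∞ / (u,ν)) · sup_{‖g‖∞ ≤ 1} |(g,μ) - (g,ν)|. In particular, the projective product map μ ↦ u·μ is Lipschitz continuous with respect to the total-variation-type metric d(μ,ν) = sup_{‖g‖∞≤1}|(g,μ)-(g,ν)|, with Lipschitz constant 2‖u‖∞/(u,ν). -/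
open MeasureTheory

/-- Lipschitz continuity of the projective product `μ ↦ u·μ` w.r.t. the
total-variation-type metric `d(μ,ν) = sup_{‖g‖∞ ≤ 1} |(g,μ) - (g,ν)|`:
`|(h, u·μ) - (h, u·ν)| ≤ (2 ‖u‖∞ ‖h‖∞ / (u,ν)) · d(μ,ν)`.
The supremum in the metric is expressed by quantifying over any upper bound `d` of
`|(g,μ) - (g,ν)|` over all measurable `g` with `‖g‖∞ ≤ 1`. -/
theorem projective_product_lipschitz_tv
    {α : Type*} [MeasurableSpace α] [Nonempty α]
    (μ ν : Measure α) [IsProbabilityMeasure μ] [IsProbabilityMeasure ν]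
    (u h : α → ℝ) (hu_meas : Measurable u) (hh_meas : Measurable h)
    (hu_pos : ∀ θ, 0 < u θ)
    (hu_bdd : BddAbove (Set.range fun θ => |u θ|))
    (hh_bdd : BddAbove (Set.range fun θ => |h θ|))
    (hiu : 0 < ∫ θ, u θ ∂μ) (hiv : 0 < ∫ θ, u θ ∂ν)
    (d : ℝ)
    (hd : ∀ g : α → ℝ, Measurable g → (∀ θ, |g θ| ≤ 1) →
      |(∫ θ, g θ ∂μ) - (∫ θ, g θ ∂ν)| ≤ d) :
    |(∫ θ, h θ * u θ ∂μ) / (∫ θ, u θ ∂μ) - (∫ θ, h θ * u θ ∂ν) / (∫ θ, u θ ∂ν)|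
      ≤ (2 * (⨆ θ, |u θ|) * (⨆ θ, |h θ|) / (∫ θ, u θ ∂ν)) * d := by
  set Mu := ⨆ θ, |u θ| with hMu_def
  set Mh := ⨆ θ, |h θ| with hMh_def
  have hMu : ∀ θ, |u θ| ≤ Mu := fun θ => le_ciSup hu_bdd θ
  have hMh : ∀ θ, |h θ| ≤ Mh := fun θ => le_ciSup hh_bdd θ
  obtain ⟨θ₀⟩ := ‹Nonempty α›
  have hMu_pos : 0 < Mu := lt_of_lt_of_le (abs_pos.mpr (hu_pos θ₀).ne') (hMu θ₀)
  have hMh_nonneg : 0 ≤ Mh := le_trans (abs_nonneg _) (hMh θ₀)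
  have hd_nonneg : 0 ≤ d := by
    have := hd (fun _ => 0) measurable_const (fun θ => by simp)
    simpa using this
  -- key lemma
  have key : ∀ (f : α → ℝ) (K : ℝ), Measurable f → 0 ≤ K → (∀ θ, |f θ| ≤ K) →
      |(∫ θ, f θ ∂μ) - (∫ θ, f θ ∂ν)| ≤ K * d := by
    intro f K hf hK hb
    rcases hK.eq_or_lt with hK0 | hKpos
    · have hz : ∀ θ, f θ = 0 := fun θ => abs_eq_zero.mp
        (le_antisymm (by rw [← hK0] at hb; exact hb θ) (abs_nonneg _))
      simp [funext hz, ← hK0]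
    · have := hd (fun θ => f θ / K) (hf.div_const K)
        (fun θ => by
          rw [abs_div, abs_of_pos hKpos, div_le_one hKpos]; exact hb θ)
      rw [integral_div, integral_div, ← sub_div, abs_div, abs_of_pos hKpos,
        div_le_iff₀ hKpos] at this
      linarith [this]
  -- integrability
  have int_u : ∀ (ρ : Measure α) [IsProbabilityMeasure ρ], Integrable u ρ := by
    intro ρ _
    exact (integrable_const Mu).mono' hu_meas.aestronglyMeasurable
      (ae_of_all _ fun θ => by simpa using hMu θ)
  have int_hu : ∀ (ρ : Measure α) [IsProbabilityMeasure ρ], Integrable (fun θ => h θ * u θ) ρ := by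
    intro ρ _
    refine (integrable_const (Mh * Mu)).mono' (hh_meas.mul hu_meas).aestronglyMeasurable
      (ae_of_all _ fun θ => ?_)
    simp only [Real.norm_eq_abs, abs_mul]
    exact mul_le_mul (hMh θ) (hMu θ) (abs_nonneg _) hMh_nonneg
  set A := ∫ θ, h θ * u θ ∂μ with hA_def
  set B := ∫ θ, u θ ∂μ with hB_def
  set C := ∫ θ, h θ * u θ ∂ν with hC_def
  set E := ∫ θ, u θ ∂ν with hE_def
  have h1 : |A - C| ≤ Mh * Mu * d := by
    apply key _ _ (hh_meas.mul hu_meas) (mul_nonneg hMh_nonneg hMu_pos.le)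
    intro θ
    rw [Pi.mul_apply, abs_mul]
    exact mul_le_mul (hMh θ) (hMu θ) (abs_nonneg _) hMh_nonneg
  have h2 : |B - E| ≤ Mu * d := key _ _ hu_meas hMu_pos.le hMu
  have hA_bdd : |A| ≤ Mh * B := by
    calc |A| ≤ ∫ θ, |h θ * u θ| ∂μ := by
          simpa only [Real.norm_eq_abs] using norm_integral_le_integral_norm (μ := μ) (fun θ => h θ * u θ)
      _ ≤ ∫ θ, Mh * u θ ∂μ := by
          apply integral_mono ((int_hu μ).abs) ((int_u μ).const_mul Mh)
          intro θ
          dsimp only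
          rw [abs_mul, abs_of_pos (hu_pos θ)]
          exact mul_le_mul_of_nonneg_right (hMh θ) (hu_pos θ).le
      _ = Mh * B := by rw [integral_const_mul]
  -- identity
  have hid : A / B - C / E = (A * (E - B)) / (B * E) + (A - C) / E := by
    field_simp
    ring
  rw [hid]
  have hBE : 0 < B * E := mul_pos hiu hiv
  calc |(A * (E - B)) / (B * E) + (A - C) / E|
      ≤ |(A * (E - B)) / (B * E)| + |(A - C) / E| := abs_add_le _ _
    _ = |A| * |E - B| / (B * E) + |A - C| / E := by
        rw [abs_div, abs_div, abs_mul, abs_of_pos hBE, abs_of_pos hiv]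
    _ ≤ (Mh * B) * (Mu * d) / (B * E) + (Mh * Mu * d) / E := by
        apply add_le_add
        · exact div_le_div_of_nonneg_right (mul_le_mul hA_bdd
            (by rwa [abs_sub_comm] at h2) (abs_nonneg _)
            (mul_nonneg hMh_nonneg hiu.le)) hBE.le |>.trans_eq rfl
        · exact div_le_div_of_nonneg_right h1 hiv.le
    _ = (2 * Mu * Mh / E) * d := by
        field_simp
        ring
end

section
/- Vanishing bias recovers the true filter: Let μ_0 be a probability measure, u_n bounded positive functions, and for each ε ≥ 0 define bias functions b_n^ε with ‖b_n^ε‖∞ ≤ ε and u_n + b_n^ε > 0. Define μ_n = u_n · μ_{n-1} and μ̄_n^ε = (u_n + b_n^ε) · μ̄_{n-1}^ε with μ̄_0^ε = μ_0. Then for every fixed n and every bounded measurable h, (h, μ̄_n^ε) → (h, μ_n) as ε → 0; more precisely |(h,μ̄_n^ε) - (h,μ_n)| ≤ C_n ε ‖h‖∞ for a constant C_n depending on n, the bounds ‖u_k‖∞ and the positive quantities (u_k, μ_{k-1}), but not on ε or h. -/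
open MeasureTheory

/-- The projective product `u·μ`: the measure `μ.withDensity u` normalized to total mass 1. -/
noncomputable def projProd {α : Type*} [MeasurableSpace α] (u : α → ℝ) (μ : Measure α) :
    Measure α :=
  ((μ.withDensity fun θ => ENNReal.ofReal (u θ)) Set.univ)⁻¹ •
    μ.withDensity fun θ => ENNReal.ofReal (u θ)

/-- The recursively defined sequence `μ_0, μ_n = u_n · μ_{n-1}` of projectively
updated measures. -/
noncomputable def projSeq {α : Type*} [MeasurableSpace α] (u : ℕ → α → ℝ)
    (μ0 : Measure α) : ℕ → Measure α
  | 0 => μ0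
  | n + 1 => projProd (u (n + 1)) (projSeq u μ0 n)

open scoped ENNReal NNReal

lemma my_integrable_of_bdd {α : Type*} [MeasurableSpace α] {μ : Measure α} [IsFiniteMeasure μ]
    {f : α → ℝ} (hf : Measurable f) {M : ℝ} (hM : ∀ θ, |f θ| ≤ M) : Integrable f μ :=
  ⟨hf.aestronglyMeasurable,
    HasFiniteIntegral.of_bounded (C := M) (Filter.Eventually.of_forall fun θ => by
      simpa using hM θ)⟩

lemma projProd_mass {α : Type*} [MeasurableSpace α] {μ : Measure α}
    {u : α → ℝ} (hpos : ∀ θ, 0 ≤ u θ) (hint : Integrable u μ) :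
    (μ.withDensity fun θ => ENNReal.ofReal (u θ)) Set.univ
      = ENNReal.ofReal (∫ θ, u θ ∂μ) := by
  rw [withDensity_apply _ MeasurableSet.univ, setLIntegral_univ,
    ← ofReal_integral_eq_lintegral_ofReal hint (Filter.Eventually.of_forall hpos)]

lemma projProd_isProb {α : Type*} [MeasurableSpace α] {μ : Measure α}
    {u : α → ℝ} (hpos : ∀ θ, 0 ≤ u θ) (hint : Integrable u μ)
    (hI : 0 < ∫ θ, u θ ∂μ) : IsProbabilityMeasure (projProd u μ) := by
  constructor
  rw [projProd, Measure.smul_apply, projProd_mass hpos hint, smul_eq_mul,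
    ENNReal.inv_mul_cancel (by simpa using hI) ENNReal.ofReal_ne_top]

lemma projProd_integral {α : Type*} [MeasurableSpace α] {μ : Measure α}
    {u : α → ℝ} (hu : Measurable u) (hpos : ∀ θ, 0 ≤ u θ) (hint : Integrable u μ)
    (hI : 0 < ∫ θ, u θ ∂μ) (h : α → ℝ) :
    ∫ θ, h θ ∂(projProd u μ) = (∫ θ, h θ * u θ ∂μ) / ∫ θ, u θ ∂μ := by
  rw [projProd, projProd_mass hpos hint, integral_smul_measure]
  have h1 : ∫ θ, h θ ∂(μ.withDensity fun θ => ENNReal.ofReal (u θ))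
      = ∫ θ, h θ * u θ ∂μ := by
    have : ∫ θ, h θ ∂(μ.withDensity fun θ => ((u θ).toNNReal : ℝ≥0∞))
        = ∫ θ, (u θ).toNNReal • h θ ∂μ :=
      integral_withDensity_eq_integral_smul (hu.real_toNNReal) h
    simpa [ENNReal.ofReal, NNReal.smul_def, Real.coe_toNNReal _ (hpos _), mul_comm] using this
  rw [h1, ENNReal.toReal_inv, ENNReal.toReal_ofReal hI.le, smul_eq_mul,
    inv_mul_eq_div]


lemma projSeq_isProb {α : Type*} [MeasurableSpace α] (μ0 : Measure α) [IsProbabilityMeasure μ0]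
    (u : ℕ → α → ℝ) (hmeas : ∀ k, Measurable (u k)) (hpos : ∀ k θ, 0 < u k θ)
    (U : ℕ → ℝ) (hbdd : ∀ k θ, u k θ ≤ U k) :
    ∀ n, IsProbabilityMeasure (projSeq u μ0 n) ∧
      0 < ∫ θ, u (n + 1) θ ∂(projSeq u μ0 n) := by
  intro n
  induction n with
  | zero =>
    refine ⟨by simpa [projSeq] using ‹IsProbabilityMeasure μ0›, ?_⟩
    have hint : Integrable (u 1) μ0 := my_integrable_of_bdd (hmeas 1)
      (M := U 1) (fun θ => abs_le.2 ⟨by linarith [hpos 1 θ, hbdd 1 θ], hbdd 1 θ⟩)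
    rw [show projSeq u μ0 0 = μ0 from rfl]
    rw [integral_pos_iff_support_of_nonneg (fun θ => (hpos 1 θ).le) hint]
    have : Function.support (u 1) = Set.univ :=
      Set.eq_univ_of_forall fun θ => (hpos 1 θ).ne'
    simp [this]
  | succ n ih =>
    obtain ⟨hP, hI⟩ := ih
    haveI := hP
    have hint : Integrable (u (n+1)) (projSeq u μ0 n) := my_integrable_of_bdd (hmeas _)
      (M := U (n+1)) (fun θ => abs_le.2 ⟨by linarith [hpos (n+1) θ, hbdd (n+1) θ], hbdd _ θ⟩)
    have hPn : IsProbabilityMeasure (projSeq u μ0 (n+1)) := by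
      rw [show projSeq u μ0 (n+1) = projProd (u (n+1)) (projSeq u μ0 n) from rfl]
      exact projProd_isProb (fun θ => (hpos _ θ).le) hint hI
    refine ⟨hPn, ?_⟩
    haveI := hPn
    have hint2 : Integrable (u (n+2)) (projSeq u μ0 (n+1)) := my_integrable_of_bdd (hmeas _)
      (M := U (n+2)) (fun θ => abs_le.2 ⟨by linarith [hpos (n+2) θ, hbdd (n+2) θ], hbdd _ θ⟩)
    rw [integral_pos_iff_support_of_nonneg (fun θ => (hpos (n+2) θ).le) hint2]
    have : Function.support (u (n+2)) = Set.univ :=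
      Set.eq_univ_of_forall fun θ => (hpos _ θ).ne'
    simp [this]

/-- vanishing bias recovers the true filter. If `μ_n = u_n·μ_{n-1}` and
`μ̄_n^ε = (u_n + b_n^ε)·μ̄_{n-1}^ε` with `‖b_n^ε‖∞ ≤ ε` and `u_n + b_n^ε > 0`, then for
every fixed `n` there is a constant `C_n` (independent of `ε`, `b` and `h`) with
`|(h, μ̄_n^ε) - (h, μ_n)| ≤ C_n ε ‖h‖∞`; in particular `(h,μ̄_n^ε) → (h,μ_n)` as `ε → 0`. -/

theorem vanishing_bias_recovers_filter
    {α : Type*} [MeasurableSpace α] (μ0 : Measure α) [IsProbabilityMeasure μ0]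
    (u : ℕ → α → ℝ) (hu_meas : ∀ n, Measurable (u n))
    (hu_pos : ∀ n θ, 0 < u n θ) (U : ℕ → ℝ) (hu_bdd : ∀ n θ, u n θ ≤ U n)
    (hnorm : ∀ n, 0 < ∫ θ, u (n + 1) θ ∂(projSeq u μ0 n))
    (n : ℕ) :
    ∃ C : ℝ, 0 ≤ C ∧
      ∀ ε : ℝ, 0 ≤ ε →
      ∀ b : ℕ → α → ℝ, (∀ k, Measurable (b k)) → (∀ k θ, |b k θ| ≤ ε) →
        (∀ k θ, 0 < u k θ + b k θ) →
      ∀ h : α → ℝ, Measurable h → ∀ H : ℝ, (∀ θ, |h θ| ≤ H) →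
        |(∫ θ, h θ ∂(projSeq (fun k θ => u k θ + b k θ) μ0 n)) -
            ∫ θ, h θ ∂(projSeq u μ0 n)| ≤ C * ε * H := by
  have hne : Nonempty α := by
    by_contra hne
    rw [not_nonempty_iff] at hne
    have h1 := measure_univ (μ := μ0)
    rw [Set.univ_eq_empty_iff.2 hne] at h1
    simp at h1
  obtain ⟨θ0⟩ := hne
  have hU : ∀ k, 0 < U k := fun k => lt_of_lt_of_le (hu_pos k θ0) (hu_bdd k θ0)
  induction n with
  | zero =>
    refine ⟨0, le_refl 0, ?_⟩
    intro ε hε b hbm hbε hbpos h hh H hH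
    simp [projSeq]
  | succ n ih =>
    obtain ⟨C, hC0, hC⟩ := ih
    set ν := projSeq u μ0 n with hν
    have hPν : IsProbabilityMeasure ν := (projSeq_isProb μ0 u hu_meas hu_pos U hu_bdd n).1
    haveI := hPν
    set I := ∫ θ, u (n+1) θ ∂ν with hIdef
    have hI : 0 < I := hnorm n
    set D := (1 + C * U (n+1) : ℝ) with hD
    have hD0 : 0 < D := by nlinarith [hU (n+1)]
    refine ⟨4 * D / I, by positivity, ?_⟩
    intro ε hε b hbm hbε hbpos h hh H hH
    have hH0 : 0 ≤ H := le_trans (abs_nonneg _) (hH θ0)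
    set v : ℕ → α → ℝ := fun k θ => u k θ + b k θ with hv
    set ν' := projSeq v μ0 n with hν'
    have hvm : ∀ k, Measurable (v k) := fun k => (hu_meas k).add (hbm k)
    have hvbdd : ∀ k θ, v k θ ≤ U k + ε := fun k θ =>
      add_le_add (hu_bdd k θ) (le_trans (le_abs_self _) (hbε k θ))
    have hseq := projSeq_isProb μ0 v hvm hbpos (fun k => U k + ε) hvbdd n
    have hPν' : IsProbabilityMeasure ν' := hseq.1
    haveI := hPν'
    -- integrabilities
    have habsu : ∀ θ, |u (n+1) θ| ≤ U (n+1) := fun θ => by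
      rw [abs_of_pos (hu_pos _ θ)]; exact hu_bdd _ θ
    have habsv : ∀ θ, |v (n+1) θ| ≤ U (n+1) + ε := fun θ => by
      rw [abs_of_pos (hbpos _ θ)]; exact hvbdd _ θ
    have habshu : ∀ θ, |h θ * u (n+1) θ| ≤ H * U (n+1) := fun θ => by
      rw [abs_mul]; exact mul_le_mul (hH θ) (habsu θ) (abs_nonneg _) hH0
    have habshv : ∀ θ, |h θ * v (n+1) θ| ≤ H * (U (n+1) + ε) := fun θ => by
      rw [abs_mul]; exact mul_le_mul (hH θ) (habsv θ) (abs_nonneg _) hH0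
    have hintu : Integrable (u (n+1)) ν := my_integrable_of_bdd (hu_meas _) habsu
    have hintuν' : Integrable (u (n+1)) ν' := my_integrable_of_bdd (hu_meas _) habsu
    have hintv : Integrable (v (n+1)) ν' := my_integrable_of_bdd (hvm _) habsv
    have hinthu : Integrable (fun θ => h θ * u (n+1) θ) ν :=
      my_integrable_of_bdd (hh.mul (hu_meas _)) habshu
    have hinthuν' : Integrable (fun θ => h θ * u (n+1) θ) ν' :=
      my_integrable_of_bdd (hh.mul (hu_meas _)) habshu
    have hinthv : Integrable (fun θ => h θ * v (n+1) θ) ν' :=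
      my_integrable_of_bdd (hh.mul (hvm _)) habshv
    set J := ∫ θ, v (n+1) θ ∂ν' with hJdef
    have hJpos : 0 < J := hseq.2
    set A := ∫ θ, h θ * v (n+1) θ ∂ν' with hA
    set B := ∫ θ, h θ * u (n+1) θ ∂ν with hB
    have hrec : ∫ θ, h θ ∂(projSeq u μ0 (n+1)) = B / I :=
      projProd_integral (hu_meas _) (fun θ => (hu_pos _ θ).le) hintu hI h
    have hrec' : ∫ θ, h θ ∂(projSeq v μ0 (n+1)) = A / J :=
      projProd_integral (hvm _) (fun θ => (hbpos _ θ).le) hintv hJpos h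
    -- estimate |J - I|
    have e1 : |J - ∫ θ, u (n+1) θ ∂ν'| ≤ ε := by
      have hdiff : J - ∫ θ, u (n+1) θ ∂ν' = ∫ θ, b (n+1) θ ∂ν' := by
        rw [hJdef, ← integral_sub hintv hintuν']
        congr 1; funext θ; simp [hv]
      rw [hdiff]
      have := norm_integral_le_of_norm_le_const (μ := ν') (f := b (n+1)) (C := ε)
        (Filter.Eventually.of_forall fun θ => by simpa using hbε (n+1) θ)
      simpa [measure_univ] using this
    have e2 : |(∫ θ, u (n+1) θ ∂ν') - I| ≤ C * ε * U (n+1) :=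
      hC ε hε b hbm hbε hbpos (u (n+1)) (hu_meas _) (U (n+1)) habsu
    have eJ : |J - I| ≤ D * ε := by
      have := abs_sub_le J (∫ θ, u (n+1) θ ∂ν') I
      have hDε : ε + C * ε * U (n+1) = D * ε := by ring
      linarith
    -- estimate |A - B|
    have e3 : |A - ∫ θ, h θ * u (n+1) θ ∂ν'| ≤ ε * H := by
      have hdiff : A - ∫ θ, h θ * u (n+1) θ ∂ν' = ∫ θ, h θ * b (n+1) θ ∂ν' := by
        rw [hA, ← integral_sub hinthv hinthuν']
        congr 1; funext θ; simp [hv]; ring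
      rw [hdiff]
      have := norm_integral_le_of_norm_le_const (μ := ν') (f := fun θ => h θ * b (n+1) θ)
        (C := H * ε) (Filter.Eventually.of_forall fun θ => by
          rw [Real.norm_eq_abs, abs_mul]
          exact mul_le_mul (hH θ) (hbε _ θ) (abs_nonneg _) hH0)
      rw [show ε * H = H * ε by ring]
      simpa [measure_univ] using this
    have e4 : |(∫ θ, h θ * u (n+1) θ ∂ν') - B| ≤ C * ε * (H * U (n+1)) :=
      hC ε hε b hbm hbε hbpos (fun θ => h θ * u (n+1) θ) (hh.mul (hu_meas _))
        (H * U (n+1)) habshu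
    have eA : |A - B| ≤ D * ε * H := by
      have := abs_sub_le A (∫ θ, h θ * u (n+1) θ ∂ν') B
      have : ε * H + C * ε * (H * U (n+1)) = D * ε * H := by ring
      have h2 := abs_sub_le A (∫ θ, h θ * u (n+1) θ ∂ν') B
      linarith
    have eB : |B| ≤ H * I := by
      have habs : Integrable (fun θ => |h θ| * |u (n+1) θ|) ν :=
        my_integrable_of_bdd (hh.abs.mul (hu_meas _).abs)
          (M := H * U (n+1)) (fun θ => by
            rw [abs_mul, abs_abs, abs_abs, ← abs_mul]; exact habshu θ)
      calc |B| ≤ ∫ θ, |h θ| * |u (n+1) θ| ∂ν := by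
            simpa [Real.norm_eq_abs, abs_mul] using norm_integral_le_integral_norm
              (μ := ν) (f := fun θ => h θ * u (n+1) θ)
        _ ≤ ∫ θ, H * u (n+1) θ ∂ν := by
            apply integral_mono habs (hintu.const_mul H)
            intro θ
            simp only [abs_of_pos (hu_pos _ θ)]
            exact mul_le_mul_of_nonneg_right (hH θ) (hu_pos _ θ).le
        _ = H * I := integral_const_mul H _
    rw [hrec, hrec']
    clear_value A B I J D
    rcases le_or_gt ε (I / (2 * D)) with hcase | hcase
    · have hDε : D * ε ≤ I / 2 := by
        have h1 : D * ε ≤ D * (I / (2 * D)) := mul_le_mul_of_nonneg_left hcase hD0.le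
        have h2 : D * (I / (2 * D)) = I / 2 := by field_simp
        linarith
      have hJhalf : I / 2 ≤ J := by
        have h1 := (abs_le.1 eJ).1
        linarith only [h1, hDε]
      have hJ0 : 0 < J := hJpos
      have key : A / J - B / I = (A - B) / J + B * (I - J) / (J * I) := by
        field_simp; ring
      rw [key]
      have hIhalf : (0:ℝ) < I / 2 := by linarith
      have t1 : |(A - B) / J| ≤ D * ε * H / (I / 2) := by
        rw [abs_div, abs_of_pos hJ0]
        exact div_le_div₀ (by positivity) eA hIhalf hJhalf
      have t2 : |B * (I - J) / (J * I)| ≤ (H * I) * (D * ε) / ((I / 2) * I) := by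
        rw [abs_div, abs_mul, abs_of_pos (mul_pos hJ0 hI)]
        apply div_le_div₀ (by positivity)
        · exact mul_le_mul eB (by rw [abs_sub_comm]; exact eJ) (abs_nonneg _) (by positivity)
        · positivity
        · exact mul_le_mul_of_nonneg_right hJhalf hI.le
      have hsum : D * ε * H / (I / 2) + (H * I) * (D * ε) / ((I / 2) * I)
          = 4 * D / I * ε * H := by field_simp; ring
      calc |(A - B) / J + B * (I - J) / (J * I)|
          ≤ |(A - B) / J| + |B * (I - J) / (J * I)| := abs_add_le _ _
        _ ≤ D * ε * H / (I / 2) + (H * I) * (D * ε) / ((I / 2) * I) := add_le_add t1 t2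
        _ = 4 * D / I * ε * H := hsum
    · -- trivial bound
      haveI : IsProbabilityMeasure (projSeq v μ0 (n+1)) :=
        (projSeq_isProb μ0 v hvm hbpos (fun k => U k + ε) hvbdd (n+1)).1
      haveI : IsProbabilityMeasure (projSeq u μ0 (n+1)) :=
        (projSeq_isProb μ0 u hu_meas hu_pos U hu_bdd (n+1)).1
      have t1 : |A / J| ≤ H := by
        rw [← hrec']
        have := norm_integral_le_of_norm_le_const (μ := projSeq v μ0 (n+1)) (f := h)
          (C := H) (Filter.Eventually.of_forall fun θ => by simpa using hH θ)
        simpa [measure_univ] using this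
      have t2 : |B / I| ≤ H := by
        rw [← hrec]
        have := norm_integral_le_of_norm_le_const (μ := projSeq u μ0 (n+1)) (f := h)
          (C := H) (Filter.Eventually.of_forall fun θ => by simpa using hH θ)
        simpa [measure_univ] using this
      rw [div_lt_iff₀ (by positivity : (0:ℝ) < 2 * D)] at hcase
      have h2 : (2:ℝ) ≤ 4 * D / I * ε := by
        rw [div_mul_eq_mul_div, le_div_iff₀ hI]
        linarith
      calc |A / J - B / I| ≤ |A / J| + |B / I| := abs_sub _ _
        _ ≤ 2 * H := by linarith
        _ ≤ 4 * D / I * ε * H := mul_le_mul_of_nonneg_right h2 hH0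
end
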